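/- Let V be a vector space over ℂ with ℤ-indexed bilinear products aₙb, let λ ∈ ℂ, and let d : V → V be a weak λ-derivation, i.e. a linear map with d(aₙb) = (da)ₙb + aₙ(db) + λ·(da)ₙ(db) for all a,b ∈ V and n ∈ ℤ. Let U := d(V) be the range of d and suppose P : U → V is a linear map with d(P(u)) = u for all u ∈ U. Then P is a weak local Rota-Baxter operator on U of weight λ. -/
import Mathlib


/-- A weak local Rota-Baxter operator on a subspace `U` of weight `lam`. -/
def WeakLocalRBO {V : Type*} [AddCommGroup V] [Module ℂ V]
    (μ : ℤ → V →ₗ[ℂ] V →ₗ[ℂ] V) (U : Submodule ℂ V)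
    (P : U →ₗ[ℂ] V) (lam : ℂ) : Prop :=
  ∀ (a b : U) (n : ℤ), (∃ c : U, P c = μ n (P a) (P b)) →
    ∃ h : μ n (a : V) (P b) + μ n (P a) (b : V) + lam • μ n (a : V) (b : V) ∈ U,
      μ n (P a) (P b) =
        P ⟨μ n (a : V) (P b) + μ n (P a) (b : V) + lam • μ n (a : V) (b : V), h⟩

/-- A right inverse, defined on the range of a weak `lam`-derivation `d`, is a
weak local Rota-Baxter operator of weight `lam` on that range. -/
theorem stmt3 {V : Type*} [AddCommGroup V] [Module ℂ V]
    (μ : ℤ → V →ₗ[ℂ] V →ₗ[ℂ] V) (lam : ℂ) (d : V →ₗ[ℂ] V)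
    (hd : ∀ (n : ℤ) (a b : V),
      d (μ n a b) = μ n (d a) b + μ n a (d b) + lam • μ n (d a) (d b))
    (P : (LinearMap.range d) →ₗ[ℂ] V)
    (hP : ∀ u : LinearMap.range d, d (P u) = (u : V)) :
    WeakLocalRBO μ (LinearMap.range d) P lam := by
  intro a b n ⟨c, hc⟩
  have key : μ n (a : V) (P b) + μ n (P a) (b : V) + lam • μ n (a : V) (b : V)
      = d (μ n (P a) (P b)) := by
    rw [hd n (P a) (P b), hP a, hP b]
  have h : μ n (a : V) (P b) + μ n (P a) (b : V) + lam • μ n (a : V) (b : V)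
      ∈ LinearMap.range d := key ▸ ⟨μ n (P a) (P b), rfl⟩
  refine ⟨h, ?_⟩
  have hce : c = ⟨μ n (a : V) (P b) + μ n (P a) (b : V) + lam • μ n (a : V) (b : V), h⟩ := by
    have : (c : V) = μ n (a : V) (P b) + μ n (P a) (b : V) + lam • μ n (a : V) (b : V) := by
      rw [key, ← hc, hP c]
    exact Subtype.ext this
  rw [← hce, hc]
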